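/- Let K/F be a quadratic extension of fields of characteristic not 2 with conjugation a ↦ ā, and fix δ ∈ K^× with δ̄ = -δ. Let V be a finite-dimensional K-vector space and let ⟨ , ⟩ : V × V → F be a nondegenerate F-bilinear alternating form satisfying ⟨a x, y⟩ = ⟨x, ā y⟩ for all a ∈ K. Then there is a unique K-hermitian form ( , ) on V with ⟨x, y⟩ = Tr_{K/F}(δ^{-1}(x, y)) for all x, y. -/

import Mathlib

/-!
For `z ∈ K` one has `2 z = Tr z + δ Tr (δ⁻¹ z)`, since the trace vanishes on the `(-1)`-eigenspace
`F δ` of `σ`. Hence the hermitian form is forced to be `(x, y) = (⟨δ x, y⟩ + δ ⟨x, y⟩) / 2`, which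
gives uniqueness (the trace form is nondegenerate as `Tr 1 = 2 ≠ 0`). Conversely this formula is
hermitian because `⟨ , ⟩` is alternating and `⟨δ x, y⟩` is symmetric, and it is `K`-linear in `x`
because it is linear over `F` and over `δ` (as `δ² ∈ F`), while `K = F ⊕ F δ`.
-/

section QuadraticExtension

variable {F K : Type*} [Field F] [Field K] [Algebra F K] (σ : K ≃ₐ[F] K)

lemma eq_zero_of_conj_eq_self_of_conj_eq_neg (h2 : (2 : F) ≠ 0) {a : K}
    (hfix : σ a = a) (hneg : σ a = -a) : a = 0 := by
  have h2K : (2 : K) ≠ 0 := by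
    rw [← map_ofNat (algebraMap F K) 2]
    exact (map_ne_zero _).2 h2
  have : (2 : K) * a = 0 := by linear_combination hneg - hfix
  exact (mul_eq_zero.1 this).resolve_left h2K

lemma trace_eq_zero_of_conj_eq_neg (h2 : (2 : F) ≠ 0) {a : K} (ha : σ a = -a) :
    Algebra.trace F K a = 0 := by
  have h : Algebra.trace F K (-a) = Algebra.trace F K a := by
    rw [← ha, Algebra.trace_eq_of_algEquiv]
  rw [map_neg] at h
  have : (2 : F) * Algebra.trace F K a = 0 := by linear_combination -h
  exact (mul_eq_zero.1 this).resolve_left h2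

variable {δ : K}

lemma linearIndependent_one_of_conj_eq_neg (h2 : (2 : F) ≠ 0) (hδ0 : δ ≠ 0) (hδ : σ δ = -δ) :
    LinearIndependent F ![1, δ] := by
  rw [LinearIndependent.pair_iff' one_ne_zero]
  intro c hc
  have hfix : σ δ = δ := by rw [← hc, map_smul, map_one]
  exact hδ0 (eq_zero_of_conj_eq_self_of_conj_eq_neg σ h2 hfix hδ)

lemma exists_eq_algebraMap_add_algebraMap_mul (h2 : (2 : F) ≠ 0)
    (hdim : Module.finrank F K = 2) (hδ0 : δ ≠ 0) (hδ : σ δ = -δ) (a : K) :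
    ∃ s t : F, a = algebraMap F K s + algebraMap F K t * δ := by
  have hspan := (linearIndependent_one_of_conj_eq_neg σ h2 hδ0 hδ).span_eq_top_of_card_eq_finrank
    (by simp [hdim])
  obtain ⟨s, t, hst⟩ := Submodule.mem_span_pair.1
    (by simpa [Matrix.range_cons] using hspan.ge (Submodule.mem_top (x := a)))
  refine ⟨t, s, ?_⟩
  rw [← hst, Algebra.smul_def, Algebra.smul_def, mul_one, add_comm]

lemma exists_algebraMap_eq_of_conj_eq_self (h2 : (2 : F) ≠ 0)
    (hdim : Module.finrank F K = 2) (hδ0 : δ ≠ 0) (hδ : σ δ = -δ) {a : K} (ha : σ a = a) :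
    ∃ s : F, algebraMap F K s = a := by
  obtain ⟨s, t, rfl⟩ := exists_eq_algebraMap_add_algebraMap_mul σ h2 hdim hδ0 hδ a
  have htδ : σ (algebraMap F K t * δ) = -(algebraMap F K t * δ) := by
    rw [map_mul, AlgEquiv.commutes, hδ, mul_neg]
  have hfix : σ (algebraMap F K t * δ) = algebraMap F K t * δ := by
    rw [map_add, AlgEquiv.commutes] at ha
    exact add_left_cancel ha
  rw [eq_zero_of_conj_eq_self_of_conj_eq_neg σ h2 hfix htδ, add_zero]
  exact ⟨s, rfl⟩

lemma exists_algebraMap_eq_mul_self (h2 : (2 : F) ≠ 0)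
    (hdim : Module.finrank F K = 2) (hδ0 : δ ≠ 0) (hδ : σ δ = -δ) :
    ∃ n : F, algebraMap F K n = δ * δ :=
  exists_algebraMap_eq_of_conj_eq_self σ h2 hdim hδ0 hδ (by rw [map_mul, hδ, neg_mul_neg])

lemma eq_zero_of_forall_trace_mul_eq_zero (hK : (Module.finrank F K : F) ≠ 0) {d : K}
    (hd : ∀ a : K, Algebra.trace F K (a * d) = 0) : d = 0 := by
  by_contra hd0
  have htr : Algebra.trace F K 1 = Module.finrank F K := by
    rw [← map_one (algebraMap F K), Algebra.trace_algebraMap, nsmul_one]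
  exact hK (htr ▸ inv_mul_cancel₀ hd0 ▸ hd d⁻¹)

end QuadraticExtension

section HermitianForm

variable {F K V : Type*} [Field F] [Field K] [Algebra F K] [AddCommGroup V] [Module K V]

structure IsConjAlternating (σ : K ≃ₐ[F] K) (B : V → V → F) : Prop where
  add_left : ∀ x y z : V, B (x + y) z = B x z + B y z
  add_right : ∀ x y z : V, B x (y + z) = B x y + B x z
  algebraMap_smul_left : ∀ (c : F) (x y : V), B (algebraMap F K c • x) y = c * B x y
  self_eq_zero : ∀ x : V, B x x = 0
  smul_left_eq_conj_smul_right : ∀ (a : K) (x y : V), B (a • x) y = B x (σ a • y)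

namespace IsConjAlternating

variable {σ : K ≃ₐ[F] K} {B : V → V → F}

lemma neg_right (hB : IsConjAlternating σ B) (x y : V) : B x (-y) = -B x y :=
  (AddMonoidHom.mk' (B x) (hB.add_right x)).map_neg y

lemma swap (hB : IsConjAlternating σ B) (x y : V) : B y x = -B x y := by
  have h := hB.self_eq_zero (x + y)
  rw [hB.add_left, hB.add_right, hB.add_right, hB.self_eq_zero, hB.self_eq_zero] at h
  linear_combination h

lemma smul_left_swap_of_conj_eq_neg (hB : IsConjAlternating σ B) {δ : K} (hδ : σ δ = -δ)
    (x y : V) : B (δ • x) y = B (δ • y) x := by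
  rw [hB.smul_left_eq_conj_smul_right, hδ, neg_smul, hB.neg_right, hB.swap (δ • y), neg_neg]

end IsConjAlternating

variable (δ : K) (B : V → V → F)

def hermitianOfAlternating (x y : V) : K :=
  (2 : K)⁻¹ * (algebraMap F K (B (δ • x) y) + algebraMap F K (B x y) * δ)

variable {σ : K ≃ₐ[F] K} {δ B}

lemma hermitianOfAlternating_add_left (hB : IsConjAlternating σ B) (x y z : V) :
    hermitianOfAlternating δ B (x + y) z =
      hermitianOfAlternating δ B x z + hermitianOfAlternating δ B y z := by
  simp only [hermitianOfAlternating, smul_add, hB.add_left, map_add]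
  ring

lemma hermitianOfAlternating_add_right (hB : IsConjAlternating σ B) (x y z : V) :
    hermitianOfAlternating δ B x (y + z) =
      hermitianOfAlternating δ B x y + hermitianOfAlternating δ B x z := by
  simp only [hermitianOfAlternating, hB.add_right, map_add]
  ring

lemma hermitianOfAlternating_algebraMap_smul_left (hB : IsConjAlternating σ B) (c : F)
    (x y : V) : hermitianOfAlternating δ B (algebraMap F K c • x) y =
      algebraMap F K c * hermitianOfAlternating δ B x y := by
  simp only [hermitianOfAlternating, smul_comm δ (algebraMap F K c) x, hB.algebraMap_smul_left,
    map_mul]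
  ring

lemma hermitianOfAlternating_smul_left_of_mul_self {n : F} (hn : algebraMap F K n = δ * δ)
    (hB : IsConjAlternating σ B) (x y : V) :
    hermitianOfAlternating δ B (δ • x) y = δ * hermitianOfAlternating δ B x y := by
  simp only [hermitianOfAlternating, smul_smul, ← hn, hB.algebraMap_smul_left, map_mul]
  rw [hn]
  ring

lemma hermitianOfAlternating_swap (hB : IsConjAlternating σ B) (hδ : σ δ = -δ) (x y : V) :
    hermitianOfAlternating δ B y x = σ (hermitianOfAlternating δ B x y) := by
  simp only [hermitianOfAlternating, hB.smul_left_swap_of_conj_eq_neg hδ y x, hB.swap y x,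
    map_mul, map_add, map_inv₀, map_ofNat, AlgEquiv.commutes, map_neg, hδ]
  ring

lemma trace_inv_mul_hermitianOfAlternating (h2 : (2 : F) ≠ 0)
    (hdim : Module.finrank F K = 2) (hδ0 : δ ≠ 0) (hδ : σ δ = -δ) (x y : V) :
    Algebra.trace F K (δ⁻¹ * hermitianOfAlternating δ B x y) = B x y := by
  have hδinv : σ δ⁻¹ = -δ⁻¹ := by rw [map_inv₀, hδ, inv_neg]
  have h : δ⁻¹ * hermitianOfAlternating δ B x y =
      ((2 : F)⁻¹ * B (δ • x) y) • δ⁻¹ + algebraMap F K ((2 : F)⁻¹ * B x y) := by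
    simp only [hermitianOfAlternating, Algebra.smul_def, map_mul, map_inv₀, map_ofNat]
    field_simp
  rw [h, map_add, map_smul, trace_eq_zero_of_conj_eq_neg σ h2 hδinv, smul_zero, zero_add,
    Algebra.trace_algebraMap, hdim, two_nsmul, ← two_mul, ← mul_assoc, mul_inv_cancel₀ h2, one_mul]

lemma hermitianOfAlternating_smul_left (h2 : (2 : F) ≠ 0) (hdim : Module.finrank F K = 2)
    (hB : IsConjAlternating σ B) (hδ0 : δ ≠ 0) (hδ : σ δ = -δ) (a : K) (x y : V) :
    hermitianOfAlternating δ B (a • x) y = a * hermitianOfAlternating δ B x y := by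
  obtain ⟨n, hn⟩ := exists_algebraMap_eq_mul_self σ h2 hdim hδ0 hδ
  obtain ⟨s, t, rfl⟩ := exists_eq_algebraMap_add_algebraMap_mul σ h2 hdim hδ0 hδ a
  rw [add_smul, hermitianOfAlternating_add_left hB, mul_smul,
    hermitianOfAlternating_algebraMap_smul_left hB, hermitianOfAlternating_algebraMap_smul_left hB,
    hermitianOfAlternating_smul_left_of_mul_self hn hB]
  ring

lemma hermitianOfAlternating_smul_right (h2 : (2 : F) ≠ 0) (hdim : Module.finrank F K = 2)
    (hB : IsConjAlternating σ B) (hδ0 : δ ≠ 0) (hδ : σ δ = -δ) (a : K) (x y : V) :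
    hermitianOfAlternating δ B x (a • y) = σ a * hermitianOfAlternating δ B x y := by
  rw [hermitianOfAlternating_swap hB hδ (a • y), hermitianOfAlternating_smul_left h2 hdim hB hδ0 hδ,
    map_mul, ← hermitianOfAlternating_swap hB hδ]

lemma eq_of_forall_trace_inv_mul_eq (hK : (Module.finrank F K : F) ≠ 0)
    (hδ0 : δ ≠ 0) {h h' : V → V → K} (hsmul : ∀ (a : K) (x y : V), h (a • x) y = a * h x y)
    (hsmul' : ∀ (a : K) (x y : V), h' (a • x) y = a * h' x y)
    (htr : ∀ x y : V, Algebra.trace F K (δ⁻¹ * h x y) = Algebra.trace F K (δ⁻¹ * h' x y)) :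
    h = h' := by
  funext x y
  rw [← sub_eq_zero]
  refine eq_zero_of_forall_trace_mul_eq_zero hK fun a ↦ ?_
  have h := htr ((δ * a) • x) y
  rw [hsmul, hsmul'] at h
  rw [mul_sub, map_sub, sub_eq_zero]
  convert h using 2 <;> field_simp

end HermitianForm

theorem stmt_3_general (F K : Type*) [Field F] [Field K] [Algebra F K]
    (h2 : (2 : F) ≠ 0) (hdim : Module.finrank F K = 2)
    (σ : K ≃ₐ[F] K)
    (δ : K) (hδ0 : δ ≠ 0) (hδ : σ δ = -δ)
    (V : Type*) [AddCommGroup V] [Module K V]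
    (B : V → V → F)
    (hBaddl : ∀ x y z : V, B (x + y) z = B x z + B y z)
    (hBaddr : ∀ x y z : V, B x (y + z) = B x y + B x z)
    (hBsmull : ∀ (c : F) (x y : V), B ((algebraMap F K c) • x) y = c * B x y)
    (hBalt : ∀ x : V, B x x = 0)
    (hBcompat : ∀ (a : K) (x y : V), B (a • x) y = B x (σ a • y)) :
    ∃! h : V → V → K,
      (∀ x y z : V, h (x + y) z = h x z + h y z) ∧
      (∀ x y z : V, h x (y + z) = h x y + h x z) ∧
      (∀ (a : K) (x y : V), h (a • x) y = a * h x y) ∧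
      (∀ (a : K) (x y : V), h x (a • y) = σ a * h x y) ∧
      (∀ x y : V, h y x = σ (h x y)) ∧
      (∀ x y : V, B x y = Algebra.trace F K (δ⁻¹ * h x y)) := by
  have hB : IsConjAlternating σ B := ⟨hBaddl, hBaddr, hBsmull, hBalt, hBcompat⟩
  have hsmul := hermitianOfAlternating_smul_left h2 hdim hB hδ0 hδ
  have htr := trace_inv_mul_hermitianOfAlternating (B := B) h2 hdim hδ0 hδ
  refine ⟨hermitianOfAlternating δ B, ⟨hermitianOfAlternating_add_left hB,
    hermitianOfAlternating_add_right hB, hsmul, hermitianOfAlternating_smul_right h2 hdim hB hδ0 hδ,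
    hermitianOfAlternating_swap hB hδ, fun x y ↦ (htr x y).symm⟩, ?_⟩
  have hK : (Module.finrank F K : F) ≠ 0 := by rw [hdim]; exact_mod_cast h2
  rintro h ⟨-, -, hsmul', -, -, htr'⟩
  exact eq_of_forall_trace_inv_mul_eq hK hδ0 hsmul' hsmul fun x y ↦ by rw [← htr', htr]

/-- Let `K/F` be a quadratic extension of fields of characteristic ≠ 2 with
conjugation `σ`, and `δ ∈ K^×` with `σ δ = -δ`.  Let `V` be a finite-dimensional `K`-vector
space and `B` a nondegenerate `F`-bilinear alternating form on `V` with
`B (a • x) y = B x (σ a • y)`.  Then there is a unique `K`-hermitian form `h` on `V` with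
`B x y = Tr_{K/F}(δ⁻¹ * h x y)` for all `x, y`. -/
theorem stmt_3 (F K : Type*) [Field F] [Field K] [Algebra F K]
    (h2 : (2 : F) ≠ 0) (hdim : Module.finrank F K = 2)
    (σ : K ≃ₐ[F] K) (hσne : ∃ x, σ x ≠ x) (hσinv : ∀ x, σ (σ x) = x)
    (δ : K) (hδ0 : δ ≠ 0) (hδ : σ δ = -δ)
    (V : Type*) [AddCommGroup V] [Module K V] [FiniteDimensional K V]
    (B : V → V → F)
    (hBaddl : ∀ x y z : V, B (x + y) z = B x z + B y z)
    (hBaddr : ∀ x y z : V, B x (y + z) = B x y + B x z)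
    (hBsmull : ∀ (c : F) (x y : V), B ((algebraMap F K c) • x) y = c * B x y)
    (hBsmulr : ∀ (c : F) (x y : V), B x ((algebraMap F K c) • y) = c * B x y)
    (hBalt : ∀ x : V, B x x = 0)
    (hBnd : ∀ x : V, (∀ y : V, B x y = 0) → x = 0)
    (hBcompat : ∀ (a : K) (x y : V), B (a • x) y = B x (σ a • y)) :
    ∃! h : V → V → K,
      (∀ x y z : V, h (x + y) z = h x z + h y z) ∧
      (∀ x y z : V, h x (y + z) = h x y + h x z) ∧
      (∀ (a : K) (x y : V), h (a • x) y = a * h x y) ∧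
      (∀ (a : K) (x y : V), h x (a • y) = σ a * h x y) ∧
      (∀ x y : V, h y x = σ (h x y)) ∧
      (∀ x y : V, B x y = Algebra.trace F K (δ⁻¹ * h x y)) :=
  stmt_3_general F K h2 hdim σ δ hδ0 hδ V B hBaddl hBaddr hBsmull hBalt hBcompat
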